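/- Let l, u, x, p ∈ ℝⁿ with lᵢ < xᵢ < uᵢ for every i and p ≠ 0, and let θ ∈ (0, 1). Define Λᵢ = max{ (lᵢ − xᵢ)/pᵢ , (uᵢ − xᵢ)/pᵢ } for indices i with pᵢ ≠ 0 and let λ(p) be the minimum of these Λᵢ. If λ(p) ≤ 1, then the truncated step x⁺ = x + max{θ, 1 − ‖p‖} · λ(p) · p lies in the interior of the box: lᵢ < x⁺ᵢ < uᵢ for every i. (Here ‖p‖ is the Euclidean norm and one assumes max{θ, 1 − ‖p‖} < 1, which holds since θ < 1 and ‖p‖ > 0.) -/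
import Mathlib


/-- Strict feasibility of the truncated step: if `l < x < u` componentwise, `p ≠ 0`,
`θ ∈ (0,1)`, `λ(p)` is the least of the `Λᵢ = max{(lᵢ−xᵢ)/pᵢ, (uᵢ−xᵢ)/pᵢ}` over indices
with `pᵢ ≠ 0`, and `λ(p) ≤ 1`, then `x⁺ = x + max{θ, 1−‖p‖}·λ(p)·p` satisfies
`l < x⁺ < u` componentwise. -/
theorem stmt_3 {n : ℕ} (l u : Fin n → ℝ) (x p : EuclideanSpace ℝ (Fin n))
    (hx : ∀ i, l i < x i ∧ x i < u i) (hp : p ≠ 0)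
    (θ : ℝ) (hθ : θ ∈ Set.Ioo (0 : ℝ) 1) (lam : ℝ)
    (hlam : IsLeast
      ((fun i => max ((l i - x i) / p i) ((u i - x i) / p i)) '' {i | p i ≠ 0}) lam)
    (hlam1 : lam ≤ 1) :
    ∀ i, l i < x i + max θ (1 - ‖p‖) * lam * p i ∧
      x i + max θ (1 - ‖p‖) * lam * p i < u i := by
  obtain ⟨⟨j, hj, hje⟩, hlb⟩ := hlam
  have hpn : 0 < ‖p‖ := norm_pos_iff.mpr hp
  have hc0 : 0 < max θ (1 - ‖p‖) := lt_of_lt_of_le hθ.1 (le_max_left _ _)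
  have hc1 : max θ (1 - ‖p‖) < 1 := max_lt hθ.2 (by linarith)
  have hlam0 : 0 < lam := by
    rw [← hje]
    rcases lt_or_gt_of_ne hj with h | h
    · exact lt_max_of_lt_left (div_pos_of_neg_of_neg (by linarith [(hx j).1]) h)
    · exact lt_max_of_lt_right (div_pos (by linarith [(hx j).2]) h)
  intro i
  obtain ⟨hxl, hxu⟩ := hx i
  rcases eq_or_ne (p i) 0 with h0 | h0
  · simpa [h0] using ⟨hxl, hxu⟩
  have hle : lam ≤ max ((l i - x i) / p i) ((u i - x i) / p i) := hlb ⟨i, h0, rfl⟩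
  rcases lt_or_gt_of_ne h0 with hneg | hpos
  · have h1 : (u i - x i) / p i < 0 :=
      div_neg_of_pos_of_neg (by linarith) hneg
    have h2 : 0 < (l i - x i) / p i :=
      div_pos_of_neg_of_neg (by linarith) hneg
    rw [max_eq_left (by linarith)] at hle
    have hl : l i - x i ≤ lam * p i := by
      have := (le_div_iff_of_neg hneg).mp hle
      linarith
    have hn : lam * p i < 0 := mul_neg_of_pos_of_neg hlam0 hneg
    have ha : 1 * (lam * p i) < max θ (1 - ‖p‖) * (lam * p i) :=
      mul_lt_mul_of_neg_right hc1 hn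
    have hb : max θ (1 - ‖p‖) * (lam * p i) < 0 := mul_neg_of_pos_of_neg hc0 hn
    constructor <;> nlinarith
  · have h2 : (l i - x i) / p i < 0 :=
      div_neg_of_neg_of_pos (by linarith) hpos
    have h1 : 0 < (u i - x i) / p i :=
      div_pos (by linarith) hpos
    rw [max_eq_right (by linarith)] at hle
    have hu : lam * p i ≤ u i - x i := by
      have := (le_div_iff₀ hpos).mp hle
      linarith
    have hn : 0 < lam * p i := mul_pos hlam0 hpos
    have ha : max θ (1 - ‖p‖) * (lam * p i) < 1 * (lam * p i) :=
      mul_lt_mul_of_pos_right hc1 hn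
    have hb : 0 < max θ (1 - ‖p‖) * (lam * p i) := mul_pos hc0 hn
    constructor <;> nlinarith
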